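/- Every 3-dynamic coloring of the wheel W_5 (with 5 spoke vertices and one hub) uses at least 6 colors; that is, the 3-dynamic chromatic number χ_3^d(W_5) ≥ 6. -/

import Mathlib

/-- The wheel `W n`: a cycle on `n` vertices (`some i`) together with a hub vertex (`none`)
adjacent to every cycle vertex. -/
def wheel (n : ℕ) : SimpleGraph (Option (Fin n)) :=
  SimpleGraph.fromRel (fun a b =>
    match a, b with
    | none, some _ => True
    | some i, some j => (j : ℕ) = ((i : ℕ) + 1) % n
    | _, _ => False)
/-- An `r`-dynamic coloring: a proper coloring such that each vertex `v` sees at least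
`min r (deg v)` distinct colors on its neighborhood. -/
def IsDynColoring {V : Type} (G : SimpleGraph V) (r : ℕ) (φ : V → ℕ) : Prop :=
  (∀ ⦃u v : V⦄, G.Adj u v → φ u ≠ φ v) ∧
  ∀ v : V, min r ((G.neighborSet v).ncard) ≤ (φ '' G.neighborSet v).ncard

/-!
At a vertex of degree at most `r`, an `r`-dynamic coloring must give all neighbors distinct
colors. In `W 5` any two rim vertices are adjacent or share a rim neighbor (of degree 3), and the
hub is adjacent to every rim vertex, so a 3-dynamic coloring is injective on all six vertices.
-/

section

variable {V : Type} {G : SimpleGraph V} {r : ℕ} {φ : V → ℕ}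

theorem IsDynColoring.injOn_neighborSet (hφ : IsDynColoring G r φ) {v : V}
    (hfin : (G.neighborSet v).Finite) (hdeg : (G.neighborSet v).ncard ≤ r) :
    Set.InjOn φ (G.neighborSet v) := by
  have hcard := hφ.2 v
  rw [min_eq_right hdeg] at hcard
  exact Set.injOn_of_ncard_image_eq (le_antisymm (Set.ncard_image_le hfin) hcard) hfin

theorem IsDynColoring.injective (hφ : IsDynColoring G r φ)
    (hG : ∀ u w, u ≠ w → G.Adj u w ∨ ∃ v, (G.neighborSet v).Finite ∧
      (G.neighborSet v).ncard ≤ r ∧ G.Adj v u ∧ G.Adj v w) :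
    Function.Injective φ := by
  intro u w hφuw
  by_contra hne
  rcases hG u w hne with hadj | ⟨v, hfin, hdeg, hvu, hvw⟩
  · exact hφ.1 hadj hφuw
  · exact hne (hφ.injOn_neighborSet hfin hdeg hvu hvw hφuw)

end

theorem wheel_adj_none_some {n : ℕ} (i : Fin n) : (wheel n).Adj none (some i) := by
  simp [wheel]

theorem wheel_five_neighborSet_some (i : Fin 5) :
    (wheel 5).neighborSet (some i) = {none, some (i + 1), some (i - 1)} := by
  ext x
  simp only [SimpleGraph.mem_neighborSet, wheel, SimpleGraph.fromRel_adj, Set.mem_insert_iff,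
    Set.mem_singleton_iff]
  fin_cases i <;> fin_cases x <;> simp <;> decide

theorem wheel_five_adj_some_add_one (i : Fin 5) : (wheel 5).Adj (some i) (some (i + 1)) := by
  change some (i + 1) ∈ (wheel 5).neighborSet (some i)
  simp [wheel_five_neighborSet_some]

theorem wheel_five_ncard_neighborSet_some_le (i : Fin 5) :
    ((wheel 5).neighborSet (some i)).ncard ≤ 3 := by
  rw [wheel_five_neighborSet_some]
  calc ({none, some (i + 1), some (i - 1)} : Set (Option (Fin 5))).ncard
      ≤ ({some (i + 1), some (i - 1)} : Set (Option (Fin 5))).ncard + 1 := Set.ncard_insert_le _ _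
    _ ≤ ({some (i - 1)} : Set (Option (Fin 5))).ncard + 1 + 1 := by
        gcongr; exact Set.ncard_insert_le _ _
    _ = 3 := by rw [Set.ncard_singleton]

theorem wheel_five_adj_or_exists_common_adj (u w : Option (Fin 5)) (hne : u ≠ w) :
    (wheel 5).Adj u w ∨ ∃ v, ((wheel 5).neighborSet v).Finite ∧
      ((wheel 5).neighborSet v).ncard ≤ 3 ∧ (wheel 5).Adj v u ∧ (wheel 5).Adj v w := by
  have common (i : Fin 5) : ∃ v, ((wheel 5).neighborSet v).Finite ∧
      ((wheel 5).neighborSet v).ncard ≤ 3 ∧ (wheel 5).Adj v (some i) ∧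
      (wheel 5).Adj v (some (i + 2)) := by
    refine ⟨some (i + 1), Set.toFinite _, wheel_five_ncard_neighborSet_some_le _,
      (wheel_five_adj_some_add_one i).symm, ?_⟩
    simpa [add_assoc, one_add_one_eq_two] using wheel_five_adj_some_add_one (i + 1)
  match u, w with
  | none, none => exact absurd rfl hne
  | none, some j => exact Or.inl (wheel_adj_none_some j)
  | some i, none => exact Or.inl (wheel_adj_none_some i).symm
  | some i, some j =>
    have hij : i ≠ j := fun h => hne (congrArg some h)
    obtain rfl | rfl | rfl | rfl : j = i + 1 ∨ i = j + 1 ∨ j = i + 2 ∨ i = j + 2 := by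
      revert hij; revert i j; decide
    · exact Or.inl (wheel_five_adj_some_add_one i)
    · exact Or.inl (wheel_five_adj_some_add_one j).symm
    · exact Or.inr (common i)
    · obtain ⟨v, hfin, hdeg, hvj, hvi⟩ := common j
      exact Or.inr ⟨v, hfin, hdeg, hvi, hvj⟩

/-- Every 3-dynamic coloring of the wheel `W 5` uses at least `6` colors; i.e.
`χ₃ᵈ(W 5) ≥ 6`. -/
theorem wheel_five_three_dynamic_ge_six (φ : Option (Fin 5) → ℕ)
    (hφ : IsDynColoring (wheel 5) 3 φ) :
    6 ≤ (Set.range φ).ncard := by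
  have hinj : Function.Injective φ := hφ.injective wheel_five_adj_or_exists_common_adj
  rw [← Set.image_univ, Set.ncard_image_of_injective _ hinj, Set.ncard_univ]
  simp
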